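/- Assume SCH. Let (A_i)_{i∈κ} be infinite Boolean algebras with 2^κ < λ_i = π(A_i) for all i ∈ κ, and let D be an ultrafilter on κ. Then π(∏_{i∈κ} A_i / D) = |∏_{i∈κ} λ_i / D|. -/

import Mathlib

open Cardinal

universe u v

/-- The algebraic density `π A` of a Boolean algebra: the least cardinality of a
dense subset of `A \ {⊥}`. -/
noncomputable def piDensity (A : Type v) [BooleanAlgebra A] : Cardinal.{v} :=
  sInf {c | ∃ X : Set A, (∀ x ∈ X, x ≠ ⊥) ∧ (∀ a : A, a ≠ ⊥ → ∃ x ∈ X, x ≤ a) ∧ c = #X}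

section BUP

variable {ι : Type u} (D : Ultrafilter ι) (A : ι → Type u) [∀ i, BooleanAlgebra (A i)]

instance piBooleanRing : BooleanRing (∀ i, AsBoolRing (A i)) :=
  { Pi.ring with isIdempotentElem := fun f => funext fun i => BooleanRing.mul_self (f i) }

/-- The ideal of elements vanishing `D`-almost everywhere. -/
def upIdeal : Ideal (∀ i, AsBoolRing (A i)) where
  carrier := {f | {i | f i = 0} ∈ D}
  zero_mem' := by
    have : {i | (0 : ∀ i, AsBoolRing (A i)) i = 0} = Set.univ := by ext i; simp
    simp only [Set.mem_setOf_eq] at *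
    exact this ▸ Filter.univ_mem
  add_mem' := by
    intro f g hf hg
    filter_upwards [hf, hg] with i h1 h2
    simp only [Pi.add_apply, h1, h2, add_zero]
  smul_mem' := by
    intro c f hf
    filter_upwards [hf] with i h1
    simp only [smul_eq_mul, Pi.mul_apply, h1, mul_zero]

instance upQuotBooleanRing : BooleanRing ((∀ i, AsBoolRing (A i)) ⧸ upIdeal D A) :=
  { (inferInstance : CommRing ((∀ i, AsBoolRing (A i)) ⧸ upIdeal D A)) with
    isIdempotentElem := fun a => by
      obtain ⟨f, rfl⟩ := Ideal.Quotient.mk_surjective a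
      unfold IsIdempotentElem
      rw [← map_mul, BooleanRing.mul_self] }

/-- The Boolean ultraproduct `∏ᵢ Aᵢ / D`. -/
def BUP : Type u := AsBoolAlg ((∀ i, AsBoolRing (A i)) ⧸ upIdeal D A)

noncomputable instance : BooleanAlgebra (BUP D A) :=
  inferInstanceAs (BooleanAlgebra (AsBoolAlg _))

end BUP

section cardUP

variable {ι : Type u} (D : Ultrafilter ι)

/-- Set-theoretic ultraproduct of a family of cardinals, seen as the quotient of the
product of the corresponding sets of ordinals by `D`-almost-everywhere equality. -/
def cardSetoid (lam : ι → Cardinal.{u}) :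
    Setoid (∀ i, (lam i).ord.ToType) where
  r f g := {i | f i = g i} ∈ D
  iseqv := by
    refine ⟨fun f => by
      have : {i | f i = f i} = Set.univ := by ext i; simp
      rw [this]; exact Filter.univ_mem, fun {f g} h => ?_, fun {f g h} h1 h2 => ?_⟩
    · filter_upwards [h] with i hi using hi.symm
    · filter_upwards [h1, h2] with i hi1 hi2 using hi1.trans hi2

/-- The cardinality of the ultraproduct `∏ᵢ λᵢ / D` of a family of cardinals. -/
noncomputable def cardUP (lam : ι → Cardinal.{u}) : Cardinal.{u} :=
  #(Quotient (cardSetoid D lam))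

end cardUP

/-!
Write `μ = π(∏ Aᵢ / D)` and `κ = |ι|`. If `Tᵢ ⊆ Aᵢ` is `D`-almost always smaller than `π Aᵢ`,
picking `aᵢ ≠ 0` above no nonzero element of `Tᵢ` gives a nonzero element of the ultraproduct
above no nonzero element whose coordinates lie almost everywhere in the `Tᵢ`. Applied to the
coordinates of a dense subset of size `μ`, this gives `π Aᵢ ≤ μ` for `D`-almost all `i`; conversely
ultraproducts of dense subsets of the `Aᵢ` are dense, so `μ ≤ |∏ π Aᵢ / D|`.

Under SCH, `2 ^ κ < μ` gives `d ^ κ ≤ μ` for all `d < μ`, and `μ ^ κ = μ` when `κ < cf μ`; in that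
case `|∏ π Aᵢ / D| ≤ μ ^ κ = μ`. Otherwise `μ` is singular, hence a limit cardinal. Enumerating a
dense subset as `(x_α)_{α < μ}`, the same argument with `Tᵢ = {x_β(i) : β < ρᵢ}` shows that no
family `ρᵢ < π Aᵢ` is `D`-almost always above every `c < μ`. So every element of `∏ π Aᵢ / D` is
almost everywhere bounded by some `c < μ`, and each of these `μ` bounds accounts for at most
`(c⁺) ^ κ ≤ μ` elements.
-/

open Set Order

namespace Cardinal

theorem mk_setOf_mk_Iio_lt_le {α : Type u} [LinearOrder α] [WellFoundedLT α]
    (e : Cardinal.{u}) : #{x : α | #(Iio x) < e} ≤ e := by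
  have hinj : Function.Injective fun x : {x : α | #(Iio x) < e} =>
      Ordinal.ToType.mk
        (⟨Ordinal.typein (α := α) (· < ·) x.1, mem_Iio.2 (lt_ord.2 x.2)⟩ : Iio e.ord) :=
    fun x y hxy => Subtype.ext (Ordinal.typein_injective _
      (congrArg Subtype.val (Ordinal.ToType.mk.injective hxy)))
  simpa using mk_le_of_injective hinj

theorem power_le_two_power_of_le {d κ : Cardinal.{u}} (hκ : ℵ₀ ≤ κ) (hd : d ≤ 2 ^ κ) :
    d ^ κ ≤ 2 ^ κ :=
  calc d ^ κ ≤ (2 ^ κ) ^ κ := power_le_power_right hd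
    _ = 2 ^ κ := by rw [← power_mul, mul_eq_self hκ]

theorem power_le_self_of_lt_cof_of_forall_lt {c κ : Cardinal.{u}} (hc : ℵ₀ ≤ c)
    (hκ : κ < c.ord.cof) (hlt : ∀ d < c, d ^ κ ≤ c) : c ^ κ ≤ c := by
  induction c using Cardinal.inductionOn with | mk α
  induction κ using Cardinal.inductionOn with | mk K
  obtain ⟨_, _, hα⟩ := exists_ord_eq_type_lt α
  rw [hα, Ordinal.cof_type] at hκ
  have hbounded : ∀ f : K → α, ∃ a, ∀ k, f k < a := fun f => by
    have : ¬ IsCofinal (range f) := fun hf => (cof_le hf).not_gt (mk_range_le.trans_lt hκ)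
    simpa [IsCofinal] using this
  have hcover : (Set.univ : Set (K → α)) = ⋃ a, {f | ∀ k, f k < a} :=
    (eq_univ_of_forall fun f => mem_iUnion.2 (hbounded f)).symm
  have hpiece : ∀ a : α, #{f : K → α | ∀ k, f k < a} ≤ #α := fun a => by
    calc #{f : K → α | ∀ k, f k < a} = #(K → Iio a) :=
          mk_congr (Equiv.subtypePiEquivPi (p := fun _ b => b < a))
      _ = #(Iio a) ^ #K := (power_def _ _).symm
      _ ≤ #α := hlt _ (mk_Iio_lt a hα)
  rw [power_def, ← mk_univ, hcover]
  calc #(⋃ a, {f : K → α | ∀ k, f k < a}) ≤ #α * ⨆ a, #{f : K → α | ∀ k, f k < a} :=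
        mk_iUnion_le _
    _ ≤ #α * #α := mul_le_mul' le_rfl (ciSup_le' hpiece)
    _ = #α := mul_eq_self hc

theorem power_le_power_cof_of_forall_lt {c κ : Cardinal.{u}} (hc : ℵ₀ ≤ c)
    (hlt : ∀ d < c, d ^ κ ≤ c) : c ^ κ ≤ c ^ c.ord.cof := by
  induction c using Cardinal.inductionOn with | mk α
  induction κ using Cardinal.inductionOn with | mk K
  obtain ⟨_, _, hα⟩ := exists_ord_eq_type_lt α
  have : NoMaxOrder α := by
    rw [← Ordinal.isSuccPrelimit_type_lt_iff, ← hα]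
    exact (isSuccLimit_ord hc).isSuccPrelimit
  obtain ⟨s, hs, hscard⟩ := exists_cof_eq α
  rw [hα, Ordinal.cof_type, ← hscard, power_def]
  -- `f` is recovered from its truncations below the points of the cofinal set `s`
  have hinj : Function.Injective fun (f : K → α) (i : s) (k : K) =>
      if h : f k < i then some (⟨f k, h⟩ : Iio i.1) else none := by
    intro f g hfg
    funext k
    obtain ⟨b, hb⟩ := exists_gt (max (f k) (g k))
    obtain ⟨i, his, hbi⟩ := hs b
    have hf : f k < i := (le_max_left _ _).trans_lt (hb.trans_le hbi)
    have hg : g k < i := (le_max_right _ _).trans_lt (hb.trans_le hbi)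
    have := congrFun (congrFun hfg ⟨i, his⟩) k
    simp only [dif_pos hf, dif_pos hg, Option.some.injEq] at this
    exact congrArg Subtype.val this
  calc #(K → α) ≤ #(∀ i : s, K → Option (Iio i.1)) := mk_le_of_injective hinj
    _ = prod fun i : s => (#(Iio i.1) + 1) ^ #K := by
        simp only [mk_pi, prod_const', mk_option]
    _ ≤ prod fun _ : s => #α := prod_le_prod _ _ fun i =>
        hlt _ (add_lt_of_lt hc (mk_Iio_lt i.1 hα) (one_lt_aleph0.trans_le hc))
    _ = #α ^ #s := prod_const' _ _

end Cardinal

def SingularCardinalHypothesis : Prop :=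
  ∀ l : Cardinal.{u}, ℵ₀ ≤ l → l.ord.cof < l → 2 ^ l.ord.cof < l → l ^ l.ord.cof = Order.succ l

namespace SingularCardinalHypothesis

variable {κ c d : Cardinal.{u}}

theorem power_le_succ_of_forall_lt (hSCH : SingularCardinalHypothesis.{u}) (hκ : ℵ₀ ≤ κ)
    (hc : 2 ^ κ < c) (hlt : ∀ d < c, d ^ κ ≤ c) : c ^ κ ≤ succ c := by
  have hc₀ : ℵ₀ ≤ c := (hκ.trans (cantor κ).le).trans hc.le
  rcases lt_or_ge κ c.ord.cof with hcof | hcof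
  · exact (power_le_self_of_lt_cof_of_forall_lt hc₀ hcof hlt).trans (le_succ c)
  · calc c ^ κ ≤ c ^ c.ord.cof := power_le_power_cof_of_forall_lt hc₀ hlt
      _ = succ c := hSCH c hc₀ (hcof.trans_lt ((cantor κ).trans hc))
          ((power_le_power_left two_ne_zero hcof).trans_lt hc)

theorem power_le_of_lt (hSCH : SingularCardinalHypothesis.{u}) (hκ : ℵ₀ ≤ κ)
    (hc : 2 ^ κ < c) (hd : d < c) : d ^ κ ≤ c := by
  induction c using WellFoundedLT.induction generalizing d with | _ c ih
  rcases le_or_gt d (2 ^ κ) with hd₂ | hd₂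
  · exact (power_le_two_power_of_le hκ hd₂).trans hc.le
  · exact (power_le_succ_of_forall_lt hSCH hκ hd₂ fun e he => ih d hd hd₂ he).trans
      (succ_le_of_lt hd)

theorem power_le_self_of_lt_cof (hSCH : SingularCardinalHypothesis.{u}) (hc₀ : ℵ₀ ≤ c)
    (hc : 2 ^ κ < c) (hcof : κ < c.ord.cof) : c ^ κ ≤ c := by
  rcases lt_or_ge κ ℵ₀ with hκ | hκ
  · obtain ⟨n, rfl⟩ := lt_aleph0.1 hκ
    exact power_nat_le hc₀
  · exact power_le_self_of_lt_cof_of_forall_lt hc₀ hcof fun d hd => power_le_of_lt hSCH hκ hc hd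

end SingularCardinalHypothesis

section IsPiDense

variable {B : Type v} [BooleanAlgebra B]

def IsPiDense (X : Set B) : Prop :=
  (∀ x ∈ X, x ≠ ⊥) ∧ ∀ a : B, a ≠ ⊥ → ∃ x ∈ X, x ≤ a

theorem IsPiDense.le_of_forall_le_imp_le {X : Set B} (hX : IsPiDense X) {a b : B}
    (h : ∀ x ∈ X, x ≤ a → x ≤ b) : a ≤ b := by
  by_contra hab
  obtain ⟨x, hxX, hx⟩ := hX.2 (a \ b) fun h' => hab (sdiff_eq_bot_iff.1 h')
  have hxb : x ≤ b ⊓ a \ b := le_inf (h x hxX (hx.trans sdiff_le)) hx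
  rw [inf_sdiff_self_right] at hxb
  exact hX.1 x hxX (le_bot_iff.1 hxb)

theorem piDensity_le_mk {X : Set B} (hX : IsPiDense X) : piDensity B ≤ #X :=
  csInf_le' ⟨X, hX.1, hX.2, rfl⟩

variable (B) in
theorem exists_isPiDense_mk_eq : ∃ X : Set B, IsPiDense X ∧ #X = piDensity B := by
  obtain ⟨X, h₁, h₂, hX⟩ := csInf_mem (s := {c | ∃ X : Set B, (∀ x ∈ X, x ≠ ⊥) ∧
    (∀ a : B, a ≠ ⊥ → ∃ x ∈ X, x ≤ a) ∧ c = #X})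
    ⟨_, {a | a ≠ ⊥}, fun _ hx => hx, fun a ha => ⟨a, ha, le_rfl⟩, rfl⟩
  exact ⟨X, ⟨h₁, h₂⟩, hX.symm⟩

theorem exists_ne_bot_forall_not_le_of_mk_lt {T : Set B} (hT : #T < piDensity B) :
    ∃ a ≠ ⊥, ∀ t ∈ T, t ≠ ⊥ → ¬ t ≤ a := by
  by_contra! h
  have hdense : IsPiDense {t ∈ T | t ≠ ⊥} :=
    ⟨fun _ ht => ht.2, fun a ha => by
      obtain ⟨t, htT, ht, hta⟩ := h a ha
      exact ⟨t, ⟨htT, ht⟩, hta⟩⟩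
  exact ((piDensity_le_mk hdense).trans (mk_le_mk_of_subset (sep_subset _ _))).not_gt hT

variable (B) in
theorem aleph0_le_piDensity [Infinite B] : ℵ₀ ≤ piDensity B := by
  obtain ⟨X, hX, hXcard⟩ := exists_isPiDense_mk_eq B
  rw [← hXcard]
  by_contra! hfin
  have hinj : Function.Injective fun a : B => {x : X | (x : B) ≤ a} := fun a b hab =>
    le_antisymm (hX.le_of_forall_le_imp_le fun x hx => (Set.ext_iff.1 hab ⟨x, hx⟩).1)
      (hX.le_of_forall_le_imp_le fun x hx => (Set.ext_iff.1 hab ⟨x, hx⟩).2)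
  have hB : #B ≤ 2 ^ #X := by simpa using mk_le_of_injective hinj
  exact (hB.trans_lt (power_lt_aleph0 ofNat_lt_aleph0 hfin)).not_ge (infinite_iff.1 ‹_›)

end IsPiDense

namespace BUP

variable {ι : Type u} (D : Ultrafilter ι) (A : ι → Type u) [∀ i, BooleanAlgebra (A i)]

def mk (f : ∀ i, A i) : BUP D A :=
  toBoolAlg (Ideal.Quotient.mk (upIdeal D A) fun i => toBoolRing (f i))

theorem mk_surjective : Function.Surjective (mk D A) := fun q => by
  obtain ⟨g, hg⟩ := Ideal.Quotient.mk_surjective (ofBoolAlg q)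
  exact ⟨fun i => ofBoolRing (g i), congrArg toBoolAlg hg⟩

variable {D A}

theorem mk_eq_mk {f g : ∀ i, A i} : mk D A f = mk D A g ↔ ∀ᶠ i in (D : Filter ι), f i = g i := by
  refine toBoolAlg.injective.eq_iff.trans (Ideal.Quotient.eq.trans ?_)
  show {i | toBoolRing (f i) - toBoolRing (g i) = 0} ∈ D ↔ _
  simp only [sub_eq_zero, toBoolRing.injective.eq_iff]
  rfl

theorem mk_inf (f g : ∀ i, A i) : mk D A f ⊓ mk D A g = mk D A (f ⊓ g) :=
  rfl

theorem mk_le_mk {f g : ∀ i, A i} : mk D A f ≤ mk D A g ↔ ∀ᶠ i in (D : Filter ι), f i ≤ g i := by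
  simp only [← inf_eq_left (a := mk D A f), mk_inf, mk_eq_mk, Pi.inf_apply, inf_eq_left]

theorem mk_eq_bot {f : ∀ i, A i} : mk D A f = ⊥ ↔ ∀ᶠ i in (D : Filter ι), f i = ⊥ :=
  mk_eq_mk (g := ⊥)

theorem mk_ne_bot {f : ∀ i, A i} : mk D A f ≠ ⊥ ↔ ∀ᶠ i in (D : Filter ι), f i ≠ ⊥ := by
  rw [Ne, mk_eq_bot, Ultrafilter.eventually_not]

theorem not_isPiDense_of_eventually_mem {X : Set (BUP D A)} (T : ∀ i, Set (A i))
    (hT : ∀ᶠ i in (D : Filter ι), #(T i) < piDensity (A i))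
    (hX : ∀ x ∈ X, ∃ f, mk D A f = x ∧ ∀ᶠ i in (D : Filter ι), f i ∈ T i) : ¬ IsPiDense X := by
  intro hdense
  have havoid : ∀ i, ∃ a : A i, #(T i) < piDensity (A i) →
      a ≠ ⊥ ∧ ∀ t ∈ T i, t ≠ ⊥ → ¬ t ≤ a := fun i => by
    by_cases hi : #(T i) < piDensity (A i)
    · obtain ⟨a, ha, hat⟩ := exists_ne_bot_forall_not_le_of_mk_lt hi
      exact ⟨a, fun _ => ⟨ha, hat⟩⟩
    · exact ⟨⊥, fun h => absurd h hi⟩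
  choose a ha using havoid
  have hane : mk D A a ≠ ⊥ := mk_ne_bot.2 (hT.mono fun i hi => (ha i hi).1)
  obtain ⟨x, hxX, hxa⟩ := hdense.2 _ hane
  obtain ⟨f, rfl, hfT⟩ := hX x hxX
  have hfne := mk_ne_bot.1 (hdense.1 _ hxX)
  obtain ⟨i, hi, hfi, hfa, hfne⟩ := (hT.and (hfT.and ((mk_le_mk.1 hxa).and hfne))).exists
  exact (ha i hi).2 _ hfi hfne hfa

variable (D A)

theorem eventually_piDensity_le :
    ∀ᶠ i in (D : Filter ι), piDensity (A i) ≤ piDensity (BUP D A) := by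
  obtain ⟨X, hX, hXcard⟩ := exists_isPiDense_mk_eq (BUP D A)
  choose rep hrep using fun x : X => mk_surjective D A x
  by_contra h
  rw [← Ultrafilter.eventually_not] at h
  refine not_isPiDense_of_eventually_mem (fun i => range fun x : X => rep x i) ?_
    (fun x hx => ⟨rep ⟨x, hx⟩, hrep _, .of_forall fun i => mem_range_self _⟩) hX
  filter_upwards [h] with i hi
  exact mk_range_le.trans_lt (hXcard ▸ not_le.1 hi)

theorem exists_lt_piDensity_eventually_le (ρ : ι → Cardinal.{u})
    (hρ : ∀ i, ρ i < piDensity (A i)) :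
    ∃ c < piDensity (BUP D A), ∀ᶠ i in (D : Filter ι), ρ i ≤ c := by
  obtain ⟨X, hX, hXcard⟩ := exists_isPiDense_mk_eq (BUP D A)
  choose rep hrep using fun x : X => mk_surjective D A x
  obtain ⟨E⟩ : Nonempty ((piDensity (BUP D A)).ord.ToType ≃ X) := by
    rw [← Cardinal.eq, mk_ord_toType, hXcard]
  by_contra! h
  refine not_isPiDense_of_eventually_mem
    (fun i => (fun α => rep (E α) i) '' {α | #(Iio α) < ρ i}) (.of_forall fun i => ?_)
    (fun x hx => ⟨rep ⟨x, hx⟩, hrep _, ?_⟩) hX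
  · exact mk_image_le.trans_lt ((mk_setOf_mk_Iio_lt_le _).trans_lt (hρ i))
  · have hα : #(Iio (E.symm ⟨x, hx⟩)) < piDensity (BUP D A) := by
      simpa using mk_Iio_lt (E.symm ⟨x, hx⟩)
    filter_upwards [h _ hα] with i hi
    exact ⟨E.symm ⟨x, hx⟩, hi, by simp only [E.apply_symm_apply]⟩

theorem piDensity_le_cardUP [∀ i, Nontrivial (A i)] :
    piDensity (BUP D A) ≤ cardUP D (fun i => piDensity (A i)) := by
  choose Y hY hYcard using fun i => exists_isPiDense_mk_eq (A i)
  have E : ∀ i, (piDensity (A i)).ord.ToType ≃ Y i := fun i =>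
    Classical.choice (Cardinal.eq.1 (by rw [mk_ord_toType, hYcard]))
  let G : Quotient (cardSetoid D fun i => piDensity (A i)) → BUP D A :=
    Quotient.lift (fun f => mk D A fun i => E i (f i)) fun f g hfg =>
      mk_eq_mk.2 (Filter.Eventually.mono hfg fun i hi => by simp only [hi])
  refine (piDensity_le_mk (X := range G) ⟨?_, fun b hb => ?_⟩).trans mk_range_le
  · rintro _ ⟨q, rfl⟩
    induction q using Quotient.inductionOn with
    | h f => exact mk_ne_bot.2 (.of_forall fun i => (hY i).1 _ (E i (f i)).2)
  · obtain ⟨g, rfl⟩ := mk_surjective D A b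
    have hbelow : ∀ i, ∃ y ∈ Y i, g i ≠ ⊥ → y ≤ g i := fun i => by
      by_cases hgi : g i = ⊥
      · obtain ⟨y, hy, -⟩ := (hY i).2 ⊤ top_ne_bot
        exact ⟨y, hy, fun h => absurd hgi h⟩
      · obtain ⟨y, hy, hyg⟩ := (hY i).2 _ hgi
        exact ⟨y, hy, fun _ => hyg⟩
    choose y hyY hyg using hbelow
    refine ⟨G ⟦fun i => (E i).symm ⟨y i, hyY i⟩⟧, mem_range_self _,
      mk_le_mk.2 ((mk_ne_bot.1 hb).mono fun i hi => ?_)⟩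
    simpa [G] using hyg i hi

end BUP

section cardUP

variable {ι : Type u} (D : Ultrafilter ι) {lam : ι → Cardinal.{u}}

theorem mk_le_power_of_eventually_mk_Iio_lt (e : Cardinal.{u})
    {P : Set (Quotient (cardSetoid D lam))}
    (hP : ∀ q ∈ P, ∀ᶠ i in (D : Filter ι), #(Iio (q.out i)) < e) : #P ≤ e ^ #ι := by
  rcases P.eq_empty_or_nonempty with rfl | ⟨q₀, hq₀⟩
  · simp
  have emb : ∀ i, {x : (lam i).ord.ToType | #(Iio x) < e} ↪ e.ord.ToType := fun i =>
    Classical.choice ((le_def _ _).1 ((mk_setOf_mk_Iio_lt_le e).trans_eq (mk_ord_toType e).symm))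
  obtain ⟨i₀, hi₀⟩ := (hP q₀ hq₀).exists
  have : Inhabited e.ord.ToType := ⟨emb i₀ ⟨_, hi₀⟩⟩
  let F : P → ι → e.ord.ToType := fun q i =>
    if h : #(Iio (q.1.out i)) < e then emb i ⟨_, h⟩ else default
  have hF : Function.Injective F := fun q q' hqq' => by
    refine Subtype.ext (Quotient.out_equiv_out.1 ?_)
    filter_upwards [hP q q.2, hP q' q'.2] with i hi hi'
    have := congrFun hqq' i
    simp only [F, dif_pos hi, dif_pos hi'] at this
    exact congrArg Subtype.val ((emb i).injective this)
  calc #P ≤ #(ι → e.ord.ToType) := mk_le_of_injective hF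
    _ = e ^ #ι := by rw [← power_def, mk_ord_toType]

theorem cardUP_le_power {e : Cardinal.{u}} (h : ∀ᶠ i in (D : Filter ι), lam i ≤ e) :
    cardUP D lam ≤ e ^ #ι := by
  rw [cardUP, ← mk_univ]
  exact mk_le_power_of_eventually_mk_Iio_lt D e fun q _ =>
    h.mono fun i hi =>
      (show #(Iio (q.out i)) < lam i by simpa using mk_Iio_lt (q.out i)).trans_le hi

theorem cardUP_le_of_forall_exists_eventually_le {μ : Cardinal.{u}} (hμ : ℵ₀ ≤ μ)
    (hlim : IsSuccLimit μ) (hpow : ∀ e < μ, e ^ #ι ≤ μ)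
    (hbdd : ∀ ρ : ι → Cardinal.{u}, (∀ i, ρ i < lam i) →
      ∃ c < μ, ∀ᶠ i in (D : Filter ι), ρ i ≤ c) :
    cardUP D lam ≤ μ := by
  let Q : Ordinal.{u} → Set (Quotient (cardSetoid D lam)) := fun o =>
    {q | ∀ᶠ i in (D : Filter ι), #(Iio (q.out i)) < succ o.card}
  have hcover : (Set.univ : Set (Quotient (cardSetoid D lam))) ⊆ ⋃ o < μ.ord, Q o := by
    intro q _
    obtain ⟨c, hc, hq⟩ := hbdd (fun i => #(Iio (q.out i))) fun i => by
      simpa using mk_Iio_lt (q.out i)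
    refine mem_iUnion₂.2 ⟨c.ord, ord_lt_ord.2 hc, hq.mono fun i hi => ?_⟩
    rwa [card_ord, lt_succ_iff]
  rw [cardUP, ← mk_univ]
  refine (mk_le_mk_of_subset hcover).trans (mk_biUnion_le_of_le (card_ord μ).le hμ Q fun o ho => ?_)
  exact (mk_le_power_of_eventually_mk_Iio_lt D _ fun q hq => hq).trans
    (hpow _ (hlim.succ_lt (lt_ord.1 ho)))

end cardUP

/-- Theorem 1.1: assuming SCH, if `2 ^ κ < π Aᵢ` for all `i ∈ κ` and `D` is an
ultrafilter on `κ`, then `π (∏ Aᵢ / D) = |∏ π(Aᵢ) / D|`. -/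
theorem piDensity_ultraproduct_eq_of_SCH {ι : Type u}
    (SCH : ∀ l : Cardinal.{u}, ℵ₀ ≤ l → l.ord.cof < l → 2 ^ l.ord.cof < l →
      l ^ l.ord.cof = Order.succ l)
    (D : Ultrafilter ι) (A : ι → Type u)
    [∀ i, BooleanAlgebra (A i)] [∀ i, Infinite (A i)]
    (h : ∀ i, 2 ^ #ι < piDensity (A i)) :
    piDensity (BUP D A) = cardUP D (fun i => piDensity (A i)) := by
  set μ := piDensity (BUP D A)
  have hlam := BUP.eventually_piDensity_le D A
  obtain ⟨j, hj⟩ := hlam.exists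
  have hμ : ℵ₀ ≤ μ := (aleph0_le_piDensity (A j)).trans hj
  have h2μ : 2 ^ #ι < μ := (h j).trans_le hj
  refine le_antisymm (BUP.piDensity_le_cardUP D A) ?_
  rcases lt_or_ge #ι μ.ord.cof with hcof | hcof
  · exact (cardUP_le_power D hlam).trans
      (SingularCardinalHypothesis.power_le_self_of_lt_cof SCH hμ h2μ hcof)
  · have hι : ℵ₀ ≤ #ι := (isRegular_cof (isSuccLimit_ord hμ)).aleph0_le.trans hcof
    have hsing : μ.IsSingular := ⟨hμ, (hcof.trans_lt ((cantor _).trans h2μ)).ne⟩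
    exact cardUP_le_of_forall_exists_eventually_le D hμ hsing.isSuccLimit
      (fun e he => SingularCardinalHypothesis.power_le_of_lt SCH hι h2μ he)
      (BUP.exists_lt_piDensity_eventually_le D A)
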